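/- arXiv:1102.1981 — 5 statements merged into one kernel-verified Lean document; each statement's English description precedes it below -/
import Mathlib

section
/- Under a gauge transformation γ := a^{-1}θa + a^{-1}da, where a: Z → GL_n(ℂ) is smooth and θ is an M_n(ℂ)-valued 1-form, the Chern-Simons form transforms as cs(γ) = cs(θ) + d Tr(θ ∧ da·a^{-1}) − (1/3) Tr((a^{-1}da)³). -/
/-!
Put `η = du·u⁻¹` and `φ = θ + η`, so that the gauge transform is the conjugate `γ = u⁻¹ φ u`.
From `d(u⁻¹) = -u⁻¹·du·u⁻¹` one gets `dγ = u⁻¹ (dφ - ηφ - φη) u`, and conjugation invariance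
of the trace gives `cs(γ) = cs(φ) - Tr(φηφ) - Tr(φφη)`. Expanding in `θ` and `η` with the
Maurer–Cartan identity `dη = η²` and graded cyclicity of the trace leaves
`cs(θ) + Tr(dθ·η) - Tr(θη²) - (1/3) Tr(η³)`, which is the claim since
`d Tr(θη) = Tr(dθ·η) - Tr(θη²)` and `u⁻¹du = u⁻¹ η u`.
-/

section GradedTrace

variable {R A S : Type*} [CommRing R] [Ring A] [Algebra R A] [AddCommGroup S] [Module R S]
  {dA : A →ₗ[R] A} {tr : A →ₗ[R] S} {deg : A → ℕ → Prop}

theorem leibniz_of_deg_zero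
    (hLeib : ∀ (a b : A) (k : ℕ), deg a k → dA (a * b) = dA a * b + ((-1 : R) ^ k) • (a * dA b))
    {a : A} (b : A) (ha : deg a 0) : dA (a * b) = dA a * b + a * dA b := by
  simpa using hLeib a b 0 ha

theorem leibniz_of_deg_one
    (hLeib : ∀ (a b : A) (k : ℕ), deg a k → dA (a * b) = dA a * b + ((-1 : R) ^ k) • (a * dA b))
    {a : A} (b : A) (ha : deg a 1) : dA (a * b) = dA a * b - a * dA b := by
  simpa [sub_eq_add_neg] using hLeib a b 1 ha

theorem trace_mul_comm_of_deg_zero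
    (htr_cyc : ∀ (a b : A) (k l : ℕ), deg a k → deg b l →
      tr (a * b) = ((-1 : R) ^ (k * l)) • tr (b * a))
    {a b : A} {l : ℕ} (ha : deg a 0) (hb : deg b l) : tr (a * b) = tr (b * a) := by
  simpa using htr_cyc a b 0 l ha hb

theorem trace_mul_comm_of_deg_one_two
    (htr_cyc : ∀ (a b : A) (k l : ℕ), deg a k → deg b l →
      tr (a * b) = ((-1 : R) ^ (k * l)) • tr (b * a))
    {a b : A} (ha : deg a 1) (hb : deg b 2) : tr (a * b) = tr (b * a) := by
  simpa using htr_cyc a b 1 2 ha hb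

theorem mul_mem_span_deg
    (hdeg_mul : ∀ a b k l, deg a k → deg b l → deg (a * b) (k + l)) {a b : A} {k l : ℕ}
    (ha : a ∈ Submodule.span R {x | deg x k}) (hb : b ∈ Submodule.span R {x | deg x l}) :
    a * b ∈ Submodule.span R {x | deg x (k + l)} := by
  have hab := Submodule.mul_mem_mul ha hb
  rw [Submodule.span_mul_span] at hab
  refine Submodule.span_mono ?_ hab
  rintro _ ⟨x, hx, y, hy, rfl⟩
  exact hdeg_mul x y k l hx hy

theorem dA_mem_span_deg
    (hdeg_d : ∀ a k, deg a k → deg (dA a) (k + 1)) {a : A} {k : ℕ}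
    (ha : a ∈ Submodule.span R {x | deg x k}) :
    dA a ∈ Submodule.span R {x | deg x (k + 1)} := by
  have : Submodule.span R {x | deg x k} ≤ (Submodule.span R {x | deg x (k + 1)}).comap dA :=
    Submodule.span_le.mpr fun x hx => Submodule.subset_span (hdeg_d x k hx)
  exact this ha

theorem leibniz_of_mem_span_deg
    (hLeib : ∀ (a b : A) (k : ℕ), deg a k → dA (a * b) = dA a * b + ((-1 : R) ^ k) • (a * dA b))
    {a : A} (b : A) {k : ℕ} (ha : a ∈ Submodule.span R {x | deg x k}) :
    dA (a * b) = dA a * b + ((-1 : R) ^ k) • (a * dA b) := by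
  induction ha using Submodule.span_induction with
  | mem x hx => exact hLeib x b k hx
  | zero => simp
  | add x y _ _ hx hy => simp only [add_mul, map_add, hx, hy, smul_add]; abel
  | smul r x _ hx => simp only [smul_mul_assoc, map_smul, hx, smul_add, smul_comm r]

theorem trace_mul_comm_of_mem_span_deg
    (htr_cyc : ∀ (a b : A) (k l : ℕ), deg a k → deg b l →
      tr (a * b) = ((-1 : R) ^ (k * l)) • tr (b * a))
    {a b : A} {k l : ℕ} (ha : a ∈ Submodule.span R {x | deg x k})
    (hb : b ∈ Submodule.span R {x | deg x l}) :
    tr (a * b) = ((-1 : R) ^ (k * l)) • tr (b * a) := by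
  induction ha using Submodule.span_induction with
  | mem x hx =>
    induction hb using Submodule.span_induction with
    | mem y hy => exact htr_cyc x y k l hx hy
    | zero => simp
    | add y z _ _ hy hz => simp only [mul_add, add_mul, map_add, hy, hz, smul_add]
    | smul r y _ hy => simp only [mul_smul_comm, smul_mul_assoc, map_smul, hy, smul_comm r]
  | zero => simp
  | add x y _ _ hx hy => simp only [mul_add, add_mul, map_add, hx, hy, smul_add]
  | smul r x _ hx => simp only [mul_smul_comm, smul_mul_assoc, map_smul, hx, smul_comm r]

variable (u : Aˣ)

theorem dA_units_inv
    (hdeg_mul : ∀ a b k l, deg a k → deg b l → deg (a * b) (k + l))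
    (hLeib : ∀ (a b : A) (k : ℕ), deg a k → dA (a * b) = dA a * b + ((-1 : R) ^ k) • (a * dA b))
    (hu : deg (u : A) 0) (hu' : deg (↑u⁻¹ : A) 0) :
    dA (↑u⁻¹ : A) = -(↑u⁻¹ * dA u * ↑u⁻¹) := by
  have h1 : deg (1 : A) 0 := by simpa using hdeg_mul _ _ 0 0 hu' hu
  have hd1 : dA (1 : A) = 0 := by
    simpa using leibniz_of_deg_zero hLeib (1 : A) h1
  have h := leibniz_of_deg_zero hLeib (u : A) hu'
  rw [Units.inv_mul, hd1] at h
  have h' := congrArg (· * (↑u⁻¹ : A)) h.symm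
  simp only [add_mul, zero_mul, Units.mul_inv_cancel_right] at h'
  rw [eq_neg_iff_add_eq_zero, h']

theorem trace_units_conj
    (hdeg_mul : ∀ a b k l, deg a k → deg b l → deg (a * b) (k + l))
    (htr_cyc : ∀ (a b : A) (k l : ℕ), deg a k → deg b l →
      tr (a * b) = ((-1 : R) ^ (k * l)) • tr (b * a))
    (hu : deg (u : A) 0) (hu' : deg (↑u⁻¹ : A) 0) {x : A} {k : ℕ} (hx : deg x k) :
    tr (↑u⁻¹ * x * u) = tr x := by
  rw [mul_assoc, trace_mul_comm_of_deg_zero htr_cyc hu' (hdeg_mul _ _ k 0 hx hu),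
    Units.mul_inv_cancel_right]

theorem dA_units_conj
    (hdeg_mul : ∀ a b k l, deg a k → deg b l → deg (a * b) (k + l))
    (hLeib : ∀ (a b : A) (k : ℕ), deg a k → dA (a * b) = dA a * b + ((-1 : R) ^ k) • (a * dA b))
    (hu : deg (u : A) 0) (hu' : deg (↑u⁻¹ : A) 0) {φ : A} (hφ : deg φ 1) :
    dA (↑u⁻¹ * φ * u) =
      ↑u⁻¹ * (dA φ - dA u * ↑u⁻¹ * φ - φ * (dA u * ↑u⁻¹)) * u := by
  rw [mul_assoc, leibniz_of_deg_zero hLeib _ hu', leibniz_of_deg_one hLeib _ hφ,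
    dA_units_inv u hdeg_mul hLeib hu hu']
  simp only [mul_sub, sub_mul, neg_mul, mul_assoc, Units.inv_mul, mul_one]
  abel

theorem dA_mul_units_inv
    (hdeg_d : ∀ a k, deg a k → deg (dA a) (k + 1))
    (hdeg_mul : ∀ a b k l, deg a k → deg b l → deg (a * b) (k + l))
    (hdd : ∀ a : A, dA (dA a) = 0)
    (hLeib : ∀ (a b : A) (k : ℕ), deg a k → dA (a * b) = dA a * b + ((-1 : R) ^ k) • (a * dA b))
    (hu : deg (u : A) 0) (hu' : deg (↑u⁻¹ : A) 0) :
    dA (dA u * ↑u⁻¹) = dA u * ↑u⁻¹ * (dA u * ↑u⁻¹) := by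
  rw [leibniz_of_deg_one hLeib _ (hdeg_d _ 0 hu), hdd, dA_units_inv u hdeg_mul hLeib hu hu']
  noncomm_ring

end GradedTrace

section ChernSimons

variable {𝕜 A S : Type*} [Field 𝕜] [Ring A] [Algebra 𝕜 A] [AddCommGroup S] [Module 𝕜 S]

def chernSimons (dA : A →ₗ[𝕜] A) (tr : A →ₗ[𝕜] S) (θ : A) : S :=
  tr (θ * dA θ) + ((2 : 𝕜) / 3) • tr (θ * θ * θ)

variable {dA : A →ₗ[𝕜] A} {tr : A →ₗ[𝕜] S} {deg : A → ℕ → Prop}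

theorem chernSimons_add_of_dA_eq_mul_self [CharZero 𝕜]
    (hdeg_d : ∀ a k, deg a k → deg (dA a) (k + 1))
    (hdeg_mul : ∀ a b k l, deg a k → deg b l → deg (a * b) (k + l))
    (htr_cyc : ∀ (a b : A) (k l : ℕ), deg a k → deg b l →
      tr (a * b) = ((-1 : 𝕜) ^ (k * l)) • tr (b * a))
    {θ η : A} (hθ : deg θ 1) (hη : deg η 1) (hdη : dA η = η * η) :
    chernSimons dA tr (θ + η) - tr ((θ + η) * (η * (θ + η))) - tr ((θ + η) * ((θ + η) * η)) =
      chernSimons dA tr θ + tr (dA θ * η) - tr (θ * (η * η)) - ((1 : 𝕜) / 3) • tr (η * η * η) := by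
  have cyc {a b : A} (ha : deg a 1) (hb : deg b 2) := trace_mul_comm_of_deg_one_two htr_cyc ha hb
  have hθθ := hdeg_mul _ _ 1 1 hθ hθ
  have hθη := hdeg_mul _ _ 1 1 hθ hη
  have hηθ := hdeg_mul _ _ 1 1 hη hθ
  have hηη := hdeg_mul _ _ 1 1 hη hη
  have r1 : tr (θ * (η * θ)) = tr (η * (θ * θ)) := by rw [cyc hθ hηθ, mul_assoc]
  have r2 : tr (η * (θ * θ)) = tr (θ * (θ * η)) := by rw [cyc hη hθθ, mul_assoc]
  have r3 : tr (η * (θ * η)) = tr (θ * (η * η)) := by rw [cyc hη hθη, mul_assoc]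
  have r4 : tr (η * (η * θ)) = tr (η * (θ * η)) := by rw [cyc hη hηθ, mul_assoc]
  have r5 : tr (η * dA θ) = tr (dA θ * η) := cyc hη (hdeg_d θ 1 hθ)
  simp only [chernSimons, map_add, hdη, mul_add, add_mul, mul_assoc]
  rw [r1, r2, r4, r3, r5]
  module

theorem chernSimons_units_conj
    (hdeg_d : ∀ a k, deg a k → deg (dA a) (k + 1))
    (hdeg_mul : ∀ a b k l, deg a k → deg b l → deg (a * b) (k + l))
    (hLeib : ∀ (a b : A) (k : ℕ), deg a k → dA (a * b) = dA a * b + ((-1 : 𝕜) ^ k) • (a * dA b))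
    (htr_cyc : ∀ (a b : A) (k l : ℕ), deg a k → deg b l →
      tr (a * b) = ((-1 : 𝕜) ^ (k * l)) • tr (b * a))
    (u : Aˣ) (hu : deg (u : A) 0) (hu' : deg (↑u⁻¹ : A) 0) {φ : A} (hφ : deg φ 1) :
    chernSimons dA tr (↑u⁻¹ * φ * u) =
      chernSimons dA tr φ - tr (φ * (dA u * ↑u⁻¹ * φ)) - tr (φ * (φ * (dA u * ↑u⁻¹))) := by
  have conj_mul (x y : A) : ↑u⁻¹ * x * u * (↑u⁻¹ * y * u) = ↑u⁻¹ * (x * y) * u := by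
    simp only [mul_assoc, Units.mul_inv_cancel_left]
  have hη : deg (dA u * ↑u⁻¹) 1 := hdeg_mul _ _ 1 0 (hdeg_d _ 0 hu) hu'
  have hconj {x : A} {k : ℕ} (hx : deg x k) := trace_units_conj u hdeg_mul htr_cyc hu hu' hx
  rw [chernSimons, dA_units_conj u hdeg_mul hLeib hu hu' hφ, conj_mul, conj_mul, conj_mul]
  simp only [mul_sub, sub_mul, map_sub]
  rw [hconj (hdeg_mul _ _ 1 2 hφ (hdeg_d φ 1 hφ)),
    hconj (hdeg_mul _ _ 1 2 hφ (hdeg_mul _ _ 1 1 hη hφ)),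
    hconj (hdeg_mul _ _ 1 2 hφ (hdeg_mul _ _ 1 1 hφ hη)),
    hconj (hdeg_mul _ _ 2 1 (hdeg_mul _ _ 1 1 hφ hφ) hφ), chernSimons]
  abel

/-- `deg` need not be closed under addition, so a sum of degree-one forms such as `θ + du·u⁻¹`
has degree one only for the linear span of the homogeneous forms, to which all axioms extend. -/
theorem chernSimons_units_conj_of_mem_span
    (hdeg_d : ∀ a k, deg a k → deg (dA a) (k + 1))
    (hdeg_mul : ∀ a b k l, deg a k → deg b l → deg (a * b) (k + l))
    (hLeib : ∀ (a b : A) (k : ℕ), deg a k → dA (a * b) = dA a * b + ((-1 : 𝕜) ^ k) • (a * dA b))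
    (htr_cyc : ∀ (a b : A) (k l : ℕ), deg a k → deg b l →
      tr (a * b) = ((-1 : 𝕜) ^ (k * l)) • tr (b * a))
    (u : Aˣ) (hu : deg (u : A) 0) (hu' : deg (↑u⁻¹ : A) 0) {φ : A}
    (hφ : φ ∈ Submodule.span 𝕜 {x | deg x 1}) :
    chernSimons dA tr (↑u⁻¹ * φ * u) =
      chernSimons dA tr φ - tr (φ * (dA u * ↑u⁻¹ * φ)) - tr (φ * (φ * (dA u * ↑u⁻¹))) :=
  chernSimons_units_conj (deg := fun a k => a ∈ Submodule.span 𝕜 {x | deg x k})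
    (fun _ _ => dA_mem_span_deg hdeg_d) (fun _ _ _ _ => mul_mem_span_deg hdeg_mul)
    (fun _ b _ => leibniz_of_mem_span_deg hLeib b)
    (fun _ _ _ _ => trace_mul_comm_of_mem_span_deg htr_cyc)
    u (Submodule.subset_span hu) (Submodule.subset_span hu') hφ

end ChernSimons

theorem stmt_2
    {A S : Type*} [Ring A] [Algebra ℂ A] [CommRing S] [Algebra ℂ S]
    (dA : A →ₗ[ℂ] A) (dS : S →ₗ[ℂ] S) (tr : A →ₗ[ℂ] S)
    (deg : A → ℕ → Prop)
    (hdeg_d : ∀ a k, deg a k → deg (dA a) (k + 1))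
    (hdeg_mul : ∀ a b k l, deg a k → deg b l → deg (a * b) (k + l))
    (hdd : ∀ a : A, dA (dA a) = 0)
    (hLeib : ∀ (a b : A) (k : ℕ), deg a k →
      dA (a * b) = dA a * b + ((-1 : ℂ) ^ k) • (a * dA b))
    (htr_cyc : ∀ (a b : A) (k l : ℕ), deg a k → deg b l →
      tr (a * b) = ((-1 : ℂ) ^ (k * l)) • tr (b * a))
    (htrd : ∀ a : A, dS (tr a) = tr (dA a))
    (θ : A) (hθ : deg θ 1)
    (u : Aˣ) (hu : deg (u : A) 0) (hu' : deg ((u⁻¹ : Aˣ) : A) 0) :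
    tr ((((u⁻¹ : Aˣ) : A) * θ * (u : A) + ((u⁻¹ : Aˣ) : A) * dA (u : A))
          * dA (((u⁻¹ : Aˣ) : A) * θ * (u : A) + ((u⁻¹ : Aˣ) : A) * dA (u : A)))
      + ((2 : ℂ) / 3) • tr ((((u⁻¹ : Aˣ) : A) * θ * (u : A) + ((u⁻¹ : Aˣ) : A) * dA (u : A))
          * (((u⁻¹ : Aˣ) : A) * θ * (u : A) + ((u⁻¹ : Aˣ) : A) * dA (u : A))
          * (((u⁻¹ : Aˣ) : A) * θ * (u : A) + ((u⁻¹ : Aˣ) : A) * dA (u : A)))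
      = (tr (θ * dA θ) + ((2 : ℂ) / 3) • tr (θ * θ * θ))
        + dS (tr (θ * (dA (u : A) * ((u⁻¹ : Aˣ) : A))))
        - ((1 : ℂ) / 3) • tr ((((u⁻¹ : Aˣ) : A) * dA (u : A))
            * (((u⁻¹ : Aˣ) : A) * dA (u : A)) * (((u⁻¹ : Aˣ) : A) * dA (u : A))) := by
  set v : A := ((u⁻¹ : Aˣ) : A)
  set η : A := dA (u : A) * v
  have hη : deg η 1 := hdeg_mul _ _ 1 0 (hdeg_d _ 0 hu) hu'
  have hdη : dA η = η * η := dA_mul_units_inv u hdeg_d hdeg_mul hdd hLeib hu hu'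
  have hθη : θ + η ∈ Submodule.span ℂ {x | deg x 1} :=
    add_mem (Submodule.subset_span hθ) (Submodule.subset_span hη)
  have hgauge : v * θ * u + v * dA (u : A) = v * (θ + η) * u := by
    simp only [η, v, mul_add, add_mul, mul_assoc, Units.inv_mul, mul_one]
  have hcube : v * dA (u : A) * (v * dA (u : A)) * (v * dA (u : A)) = v * (η * η * η) * u := by
    have hmc : v * dA (u : A) = v * η * u := by simp only [η, v, mul_assoc, Units.inv_mul, mul_one]
    rw [hmc, ← pow_three', Units.conj_pow', pow_three']
  change chernSimons dA tr (v * θ * u + v * dA (u : A)) = _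
  rw [hgauge, chernSimons_units_conj_of_mem_span hdeg_d hdeg_mul hLeib htr_cyc u hu hu' hθη,
    chernSimons_add_of_dA_eq_mul_self hdeg_d hdeg_mul htr_cyc hθ hη hdη,
    htrd, leibniz_of_deg_one hLeib _ hθ, hdη, hcube,
    trace_units_conj u hdeg_mul htr_cyc hu hu' (hdeg_mul _ _ 2 1 (hdeg_mul _ _ 1 1 hη hη) hη),
    map_sub, chernSimons]
  abel
end

section
/- Let ω, T be so(3)-valued 1-forms on a 3-manifold satisfying the flatness equations dω + ω∧ω − T∧T = 0 and dT + T∧ω + ω∧T = 0. Then Tr(ω³ − 3T²∧ω) = −3 Tr(ω∧dω + (2/3)ω³) and Tr(3ω²∧T − T³) = −4Tr(T³) − 3 d(Tr(T∧ω)). -/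
/-!
The two left-hand sides are the real and imaginary parts of `tr((ω + iT)³)` for the flat
connection `ω + iT`. Substituting `dω = T² − ω²` and `dT = −(Tω + ωT)` from the flatness
equations reduces both sides to traces of cubic monomials in `ω` and `T`, which agree because
the trace of a product of 1-forms is invariant under cyclic rotation (moving a 2-form past a
1-form costs the sign `(-1)^2 = 1`).
-/

section

variable {A S : Type*} [Ring A] [Algebra ℂ A] [AddCommGroup S] [Module ℂ S] (tr : A →ₗ[ℂ] S)

theorem tr_mul_mul_rotate_of_deg_one (deg : A → ℕ → Prop)
    (hdeg_mul : ∀ a b k l, deg a k → deg b l → deg (a * b) (k + l))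
    (htr_cyc : ∀ (a b : A) (k l : ℕ), deg a k → deg b l →
      tr (a * b) = ((-1 : ℂ) ^ (k * l)) • tr (b * a))
    {x y z : A} (hx : deg x 1) (hy : deg y 1) (hz : deg z 1) :
    tr (x * y * z) = tr (z * x * y) := by
  simpa [mul_assoc] using htr_cyc (x * y) z 2 1 (hdeg_mul x y 1 1 hx hy) hz

theorem d_tr_mul_of_deg_one (deg : A → ℕ → Prop) (dA : A →ₗ[ℂ] A) (dS : S →ₗ[ℂ] S)
    (hLeib : ∀ (a b : A) (k : ℕ), deg a k →
      dA (a * b) = dA a * b + ((-1 : ℂ) ^ k) • (a * dA b))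
    (htrd : ∀ a : A, dS (tr a) = tr (dA a)) {a : A} (b : A) (ha : deg a 1) :
    dS (tr (a * b)) = tr (dA a * b) - tr (a * dA b) := by
  rw [htrd, hLeib a b 1 ha, map_add, map_smul]
  module

theorem tr_re_cube_of_flat (dA : A →ₗ[ℂ] A) {ω T : A}
    (hdω : dA ω = T * T - ω * ω) (hcyc : tr (T * T * ω) = tr (ω * T * T)) :
    tr (ω * ω * ω - (3 : ℂ) • (T * T * ω))
      = (-3 : ℂ) • (tr (ω * dA ω) + ((2 : ℂ) / 3) • tr (ω * ω * ω)) := by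
  rw [hdω, mul_sub, ← mul_assoc, ← mul_assoc, map_sub, map_sub, map_smul, hcyc]
  module

theorem tr_im_cube_of_flat (dA : A →ₗ[ℂ] A) (dS : S →ₗ[ℂ] S) {ω T : A}
    (hdω : dA ω = T * T - ω * ω) (hdT : dA T = -(T * ω) - ω * T)
    (hd : dS (tr (T * ω)) = tr (dA T * ω) - tr (T * dA ω))
    (hcyc : tr (ω * T * ω) = tr (ω * ω * T)) :
    tr ((3 : ℂ) • (ω * ω * T) - T * T * T)
      = (-4 : ℂ) • tr (T * T * T) - (3 : ℂ) • dS (tr (T * ω)) := by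
  have hexpand : (-(T * ω) - ω * T) * ω - T * (T * T - ω * ω) = -(ω * T * ω) - T * T * T := by
    noncomm_ring
  rw [hd, ← map_sub tr, hdT, hdω, hexpand]
  simp only [map_sub, map_neg, map_smul, hcyc]
  module

end

theorem stmt_11_general
    {A S : Type*} [Ring A] [Algebra ℂ A] [CommRing S] [Algebra ℂ S]
    (dA : A →ₗ[ℂ] A) (dS : S →ₗ[ℂ] S) (tr : A →ₗ[ℂ] S)
    (deg : A → ℕ → Prop)
    (hdeg_mul : ∀ a b k l, deg a k → deg b l → deg (a * b) (k + l))
    (hLeib : ∀ (a b : A) (k : ℕ), deg a k →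
      dA (a * b) = dA a * b + ((-1 : ℂ) ^ k) • (a * dA b))
    (htr_cyc : ∀ (a b : A) (k l : ℕ), deg a k → deg b l →
      tr (a * b) = ((-1 : ℂ) ^ (k * l)) • tr (b * a))
    (htrd : ∀ a : A, dS (tr a) = tr (dA a))
    (ω T : A) (hω : deg ω 1) (hT : deg T 1)
    (hflat1 : dA ω + ω * ω - T * T = 0)
    (hflat2 : dA T + T * ω + ω * T = 0) :
    tr (ω * ω * ω - (3 : ℂ) • (T * T * ω))
        = (-3 : ℂ) • (tr (ω * dA ω) + ((2 : ℂ) / 3) • tr (ω * ω * ω))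
    ∧ tr ((3 : ℂ) • (ω * ω * T) - T * T * T)
        = (-4 : ℂ) • tr (T * T * T) - (3 : ℂ) • dS (tr (T * ω)) := by
  have hdω : dA ω = T * T - ω * ω := by
    rw [← sub_eq_zero, ← hflat1]; abel
  have hdT : dA T = -(T * ω) - ω * T := by
    rw [← sub_eq_zero, ← hflat2]; abel
  exact ⟨tr_re_cube_of_flat tr dA hdω
      (tr_mul_mul_rotate_of_deg_one tr deg hdeg_mul htr_cyc hT hT hω),
    tr_im_cube_of_flat tr dA dS hdω hdT
      (d_tr_mul_of_deg_one tr deg dA dS hLeib htrd ω hT)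
      (tr_mul_mul_rotate_of_deg_one tr deg hdeg_mul htr_cyc hω hT hω)⟩

theorem stmt_11
    {A S : Type*} [Ring A] [Algebra ℂ A] [CommRing S] [Algebra ℂ S]
    (dA : A →ₗ[ℂ] A) (dS : S →ₗ[ℂ] S) (tr : A →ₗ[ℂ] S)
    (deg : A → ℕ → Prop)
    (hdeg_d : ∀ a k, deg a k → deg (dA a) (k + 1))
    (hdeg_mul : ∀ a b k l, deg a k → deg b l → deg (a * b) (k + l))
    (hdd : ∀ a : A, dA (dA a) = 0)
    (hLeib : ∀ (a b : A) (k : ℕ), deg a k →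
      dA (a * b) = dA a * b + ((-1 : ℂ) ^ k) • (a * dA b))
    (htr_cyc : ∀ (a b : A) (k l : ℕ), deg a k → deg b l →
      tr (a * b) = ((-1 : ℂ) ^ (k * l)) • tr (b * a))
    (htrd : ∀ a : A, dS (tr a) = tr (dA a))
    (ω T : A) (hω : deg ω 1) (hT : deg T 1)
    (hflat1 : dA ω + ω * ω - T * T = 0)
    (hflat2 : dA T + T * ω + ω * T = 0) :
    tr (ω * ω * ω - (3 : ℂ) • (T * T * ω))
        = (-3 : ℂ) • (tr (ω * dA ω) + ((2 : ℂ) / 3) • tr (ω * ω * ω))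
    ∧ tr ((3 : ℂ) • (ω * ω * T) - T * T * T)
        = (-4 : ℂ) • tr (T * T * T) - (3 : ℂ) • dS (tr (T * ω)) :=
  stmt_11_general dA dS tr deg hdeg_mul hLeib htr_cyc htrd ω T hω hT hflat1 hflat2
end

section
/- If ω + iT is a flat sl₂(ℂ)-type connection form on an oriented hyperbolic 3-manifold (i.e., d(ω+iT) + (ω+iT)∧(ω+iT) = 0) with T_{ij}(Y) = g(Y×S_j, S_i) for an orthonormal frame S, then cs(ω+iT) = 8i dvol_g + i d(Tr(T∧ω)) + Tr(ω∧dω + (2/3)ω³). -/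
/-!
Substitute the flatness equations `dω = T² − ω²` and `dT = −(Tω + ωT)` into
`cs(ω + iT)` and `d Tr(Tω)`. By graded cyclicity of the trace, every cubic term
is then one of `q = Tr(ω²T)`, `r = Tr(ωT²)`, `t = Tr(T³) = 6 dvol_g`, or `Tr ω³`.
The real parts of both sides agree because the `r`-terms cancel; the imaginary
parts both equal `t/3 − q`.
-/

section

variable {A S : Type*} [Ring A] [Algebra ℂ A] [AddCommGroup S] [Module ℂ S]
  {tr : A →ₗ[ℂ] S} {deg : A → ℕ → Prop}

theorem trace_mul_mul_rotate
    (hdeg_mul : ∀ a b k l, deg a k → deg b l → deg (a * b) (k + l))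
    (htr_cyc : ∀ (a b : A) (k l : ℕ), deg a k → deg b l →
      tr (a * b) = ((-1 : ℂ) ^ (k * l)) • tr (b * a))
    (a b c : A) (ha : deg a 1) (hb : deg b 1) (hc : deg c 1) :
    tr (a * (b * c)) = tr (b * (c * a)) := by
  simpa [mul_assoc] using htr_cyc a (b * c) 1 2 ha (hdeg_mul b c 1 1 hb hc)

variable {ω T : A}

theorem trace_cubic_monomials_eq
    (hcyc : ∀ a b c : A, deg a 1 → deg b 1 → deg c 1 → tr (a * (b * c)) = tr (b * (c * a)))
    (hω : deg ω 1) (hT : deg T 1) :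
    tr (T * (ω * ω)) = tr (ω * (ω * T)) ∧ tr (ω * (T * ω)) = tr (ω * (ω * T)) ∧
      tr (T * (ω * T)) = tr (ω * (T * T)) ∧ tr (T * (T * ω)) = tr (ω * (T * T)) :=
  ⟨hcyc T ω ω hT hω hω, (hcyc ω T ω hω hT hω).trans (hcyc T ω ω hT hω hω),
    hcyc T ω T hT hω hT, (hcyc T T ω hT hT hω).trans (hcyc T ω T hT hω hT)⟩

theorem trace_cube_add_I_smul
    (hcyc : ∀ a b c : A, deg a 1 → deg b 1 → deg c 1 → tr (a * (b * c)) = tr (b * (c * a)))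
    (hω : deg ω 1) (hT : deg T 1) :
    tr ((ω + Complex.I • T) * (ω + Complex.I • T) * (ω + Complex.I • T))
      = tr (ω * ω * ω) + (3 * Complex.I) • tr (ω * (ω * T))
        - (3 : ℂ) • tr (ω * (T * T)) - Complex.I • tr (T * T * T) := by
  obtain ⟨h₁, h₂, h₃, h₄⟩ := trace_cubic_monomials_eq hcyc hω hT
  simp only [mul_add, add_mul, smul_mul_assoc, mul_smul_comm, mul_assoc, map_add, map_smul,
    h₁, h₂, h₃, h₄]
  match_scalars <;> grind [Complex.I_sq]

variable {dA : A →ₗ[ℂ] A}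

theorem trace_mul_d_add_I_smul_of_flat
    (hcyc : ∀ a b c : A, deg a 1 → deg b 1 → deg c 1 → tr (a * (b * c)) = tr (b * (c * a)))
    (hω : deg ω 1) (hT : deg T 1) (hdω : dA ω = T * T - ω * ω) (hdT : dA T = -(T * ω + ω * T)) :
    tr ((ω + Complex.I • T) * dA (ω + Complex.I • T))
      = tr (ω * dA ω) + Complex.I • (tr (T * T * T) - (3 : ℂ) • tr (ω * (ω * T)))
        + (2 : ℂ) • tr (ω * (T * T)) := by
  obtain ⟨h₁, h₂, h₃, h₄⟩ := trace_cubic_monomials_eq hcyc hω hT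
  rw [map_add, map_smul, hdT, hdω]
  simp only [mul_add, add_mul, mul_sub, mul_neg, smul_mul_assoc, mul_smul_comm, mul_assoc,
    map_add, map_sub, map_neg, map_smul, h₁, h₂, h₃, h₄]
  match_scalars <;> grind [Complex.I_sq]

theorem d_trace_mul_of_flat {dS : S →ₗ[ℂ] S}
    (hcyc : ∀ a b c : A, deg a 1 → deg b 1 → deg c 1 → tr (a * (b * c)) = tr (b * (c * a)))
    (hω : deg ω 1) (hT : deg T 1) (hdω : dA ω = T * T - ω * ω) (hdT : dA T = -(T * ω + ω * T))
    (htrd : ∀ a : A, dS (tr a) = tr (dA a))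
    (hLeib : ∀ (a b : A) (k : ℕ), deg a k →
      dA (a * b) = dA a * b + ((-1 : ℂ) ^ k) • (a * dA b)) :
    dS (tr (T * ω)) = -tr (ω * (ω * T)) - tr (T * T * T) := by
  obtain ⟨h₁, h₂, -, -⟩ := trace_cubic_monomials_eq hcyc hω hT
  rw [htrd, hLeib T ω 1 hT, hdω, hdT]
  simp only [neg_add, add_mul, neg_mul, mul_sub, mul_assoc, pow_one, neg_smul, one_smul,
    map_add, map_sub, map_neg, h₁, h₂]
  abel

end

theorem stmt_12_general
    {A S : Type*} [Ring A] [Algebra ℂ A] [CommRing S] [Algebra ℂ S]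
    (dA : A →ₗ[ℂ] A) (dS : S →ₗ[ℂ] S) (tr : A →ₗ[ℂ] S)
    (deg : A → ℕ → Prop)
    (hdeg_mul : ∀ a b k l, deg a k → deg b l → deg (a * b) (k + l))
    (hLeib : ∀ (a b : A) (k : ℕ), deg a k →
      dA (a * b) = dA a * b + ((-1 : ℂ) ^ k) • (a * dA b))
    (htr_cyc : ∀ (a b : A) (k l : ℕ), deg a k → deg b l →
      tr (a * b) = ((-1 : ℂ) ^ (k * l)) • tr (b * a))
    (htrd : ∀ a : A, dS (tr a) = tr (dA a))
    (ω T : A) (hω : deg ω 1) (hT : deg T 1)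
    (hflat1 : dA ω + ω * ω - T * T = 0)
    (hflat2 : dA T + T * ω + ω * T = 0)
    (vol : S) (hvol : tr (T * T * T) = (6 : ℂ) • vol) :
    tr ((ω + Complex.I • T) * dA (ω + Complex.I • T))
      + ((2 : ℂ) / 3) • tr ((ω + Complex.I • T) * (ω + Complex.I • T)
          * (ω + Complex.I • T))
      = ((8 : ℂ) * Complex.I) • vol + Complex.I • dS (tr (T * ω))
        + (tr (ω * dA ω) + ((2 : ℂ) / 3) • tr (ω * ω * ω)) := by
  have hcyc := trace_mul_mul_rotate hdeg_mul htr_cyc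
  have hdω : dA ω = T * T - ω * ω := by rw [← sub_eq_zero, ← hflat1]; abel
  have hdT : dA T = -(T * ω + ω * T) := by rw [← sub_eq_zero, ← hflat2]; abel
  rw [trace_mul_d_add_I_smul_of_flat hcyc hω hT hdω hdT, trace_cube_add_I_smul hcyc hω hT,
    d_trace_mul_of_flat hcyc hω hT hdω hdT htrd hLeib, hvol]
  module

theorem stmt_12
    {A S : Type*} [Ring A] [Algebra ℂ A] [CommRing S] [Algebra ℂ S]
    (dA : A →ₗ[ℂ] A) (dS : S →ₗ[ℂ] S) (tr : A →ₗ[ℂ] S)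
    (deg : A → ℕ → Prop)
    (hdeg_d : ∀ a k, deg a k → deg (dA a) (k + 1))
    (hdeg_mul : ∀ a b k l, deg a k → deg b l → deg (a * b) (k + l))
    (hdd : ∀ a : A, dA (dA a) = 0)
    (hLeib : ∀ (a b : A) (k : ℕ), deg a k →
      dA (a * b) = dA a * b + ((-1 : ℂ) ^ k) • (a * dA b))
    (htr_cyc : ∀ (a b : A) (k l : ℕ), deg a k → deg b l →
      tr (a * b) = ((-1 : ℂ) ^ (k * l)) • tr (b * a))
    (htrd : ∀ a : A, dS (tr a) = tr (dA a))
    (ω T : A) (hω : deg ω 1) (hT : deg T 1)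
    (hflat1 : dA ω + ω * ω - T * T = 0)
    (hflat2 : dA T + T * ω + ω * T = 0)
    (vol : S) (hvol : tr (T * T * T) = (6 : ℂ) • vol) :
    tr ((ω + Complex.I • T) * dA (ω + Complex.I • T))
      + ((2 : ℂ) / 3) • tr ((ω + Complex.I • T) * (ω + Complex.I • T)
          * (ω + Complex.I • T))
      = ((8 : ℂ) * Complex.I) • vol + Complex.I • dS (tr (T * ω))
        + (tr (ω * dA ω) + ((2 : ℂ) / 3) • tr (ω * ω * ω)) :=
  stmt_12_general dA dS tr deg hdeg_mul hLeib htr_cyc htrd ω T hω hT hflat1 hflat2 vol hvol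
end

section
/- Let h be a hyperbolic metric on a surface M and Ḣ^s, Ḣ^t trace-free divergence-free symmetric endomorphisms (variations) at h. Then at each point, with X₁, X₂ an oriented orthonormal frame, Tr(R²)(∂_s, ∂_t, X₁, X₂) = −Tr(J Ḣ^s Ḣ^t), where R is the vertical curvature with R_{∂_s∂_t} = −(1/4)[Ḣ^s, Ḣ^t], ⟨R_{X₁X₂}X₂,X₁⟩ = −1, R_{∂_t X_j}=0, and J is the complex structure. -/
open Matrix

/-!
In the frame `X₁ = e₀, X₂ = e₁` the complex structure is `J = !![0, -1; 1, 0]`. A skew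
`2 × 2` matrix with `⟨R X₂, X₁⟩ = -1` is exactly `J`, so `R_{X₁X₂} = J`. A symmetric
trace-free matrix anticommutes with `J`, and then cyclicity of the trace gives
`Tr([Ḣ^s, Ḣ^t] J) = 2 Tr(J Ḣ^s Ḣ^t)`; the factor `-1/4` of `R_{∂_s∂_t}` does the rest.
-/

namespace Matrix

variable {R : Type*} [CommRing R]

theorem eq_smul_rot_of_transpose_eq_neg [IsAddTorsionFree R] {A : Matrix (Fin 2) (Fin 2) R}
    (hA : Aᵀ = -A) : A = -A 0 1 • !![0, -1; 1, 0] := by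
  have h := congrFun₂ hA
  have h00 : A 0 0 = 0 := self_eq_neg.mp (h 0 0)
  have h11 : A 1 1 = 0 := self_eq_neg.mp (h 1 1)
  have h10 : A 1 0 = -A 0 1 := h 0 1
  ext i j
  fin_cases i <;> fin_cases j <;> simp [h00, h11, h10]

theorem rot_mul_eq_neg_mul_rot_of_symm_traceless {A : Matrix (Fin 2) (Fin 2) R}
    (hsym : Aᵀ = A) (htr : A.trace = 0) : A * !![0, -1; 1, 0] = -(!![0, -1; 1, 0] * A) := by
  have h10 : A 1 0 = A 0 1 := congrFun₂ hsym 0 1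
  have h11 : A 1 1 = -A 0 0 := eq_neg_of_add_eq_zero_right (by simpa [trace_fin_two] using htr)
  rw [eta_fin_two A, h10, h11]
  simp

theorem trace_commutator_mul_of_anticomm {n : Type*} [Fintype n] {A B C : Matrix n n R}
    (hAC : A * C = -(C * A)) : ((A * B - B * A) * C).trace = 2 * (C * A * B).trace := by
  have hBAC : (B * A * C).trace = -(C * A * B).trace := by
    rw [Matrix.mul_assoc, hAC, Matrix.mul_neg, trace_neg, trace_mul_comm]
  rw [Matrix.sub_mul, trace_sub, hBAC, trace_mul_cycle]
  ring

end Matrix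

theorem stmt_16_general
    (Hs Ht Rst RX : Matrix (Fin 2) (Fin 2) ℝ)
    (hHs_sym : Hsᵀ = Hs)
    (hHs_tr : Hs.trace = 0)
    (hRst : Rst = (-(1 / 4 : ℝ)) • (Hs * Ht - Ht * Hs))
    (hRX_anti : RXᵀ = -RX)
    (hRX : (RX *ᵥ (Pi.single 1 1 : Fin 2 → ℝ)) ⬝ᵥ (Pi.single 0 1 : Fin 2 → ℝ) = -1) :
    2 * (Rst * RX).trace = -(!![0, -1; 1, 0] * Hs * Ht).trace := by
  have hRX01 : RX 0 1 = -1 := by simpa [mulVec_single_one, dotProduct_single_one] using hRX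
  have hRX_rot : RX = !![0, -1; 1, 0] := by
    rw [eq_smul_rot_of_transpose_eq_neg hRX_anti, hRX01, neg_neg, one_smul]
  rw [hRst, hRX_rot, smul_mul, trace_smul,
    trace_commutator_mul_of_anticomm (rot_mul_eq_neg_mul_rot_of_symm_traceless hHs_sym hHs_tr),
    smul_eq_mul]
  ring

theorem stmt_16
    (Hs Ht Rst RX : Matrix (Fin 2) (Fin 2) ℝ)
    (hHs_sym : Hsᵀ = Hs) (hHt_sym : Htᵀ = Ht)
    (hHs_tr : Hs.trace = 0) (hHt_tr : Ht.trace = 0)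
    (hRst : Rst = (-(1 / 4 : ℝ)) • (Hs * Ht - Ht * Hs))
    (hRX_anti : RXᵀ = -RX)
    (hRX : (RX *ᵥ (Pi.single 1 1 : Fin 2 → ℝ)) ⬝ᵥ (Pi.single 0 1 : Fin 2 → ℝ) = -1) :
    2 * (Rst * RX).trace = -(!![0, -1; 1, 0] * Hs * Ht).trace :=
  stmt_16_general Hs Ht Rst RX hHs_sym hHs_tr hRst hRX_anti hRX
end

section
/- Let κ_h denote the Killing vector field on hyperbolic 3-space ℍ³ (upper half-space model, viewed in the quaternions) generated by h ∈ sl₂(ℂ) via the PSL₂(ℂ) isometric action. Then at the point q ∈ ℍ³, κ_h(q) = b + aq + qa − qcq where h = [[a,b],[c,−a]], identifying T_qℍ³ with ℂ ⊕ jℝ, and the Killing fields satisfy κ_{ih} = −(1/2) curl(κ_h). -/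
/-!
Hyperbolic 3-space `ℍ³ = {y₁ + i y₂ + j y₃ : y₃ > 0}` inside the quaternions,
with metric `|dy|²/y₃²`.  `PSL₂(ℂ)` acts by `γ·ζ = (aζ+b)(cζ+d)⁻¹` (complex
numbers embedded in the quaternions), and for `h = [[a,b],[c,−a]] ∈ sl₂(ℂ)` the
Killing field `κ_h` is the derivative at `t = 0` of the flow `t ↦ γ(t)·ζ` of any
differentiable curve `γ` in `SL₂(ℂ)` with `γ(0) = 1`, `γ'(0) = h`.
First claim: `κ_h(ζ) = b + aζ + ζa − ζcζ`, identifying `T_ζℍ³` with `ℂ ⊕ jℝ`.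
Second claim: `κ_{ih} = −(1/2) curl(κ_h)`, where the curl is with respect to the
hyperbolic metric and the standard orientation; in the coordinates
`y = (y₁,y₂,y₃)`, for a conformally flat metric `λ²δ` with `λ = 1/y₃`,
`curl(u)^k = λ⁻³ (∂_{k+1}(λ² u_{k+2}) − ∂_{k+2}(λ² u_{k+1}))` (indices cyclic).
-/

noncomputable section

/-- Embedding of `ℂ` into the quaternions. -/
def cq (z : ℂ) : Quaternion ℝ := ⟨z.re, z.im, 0, 0⟩

/-- The point of `ℍ³ ⊂ quaternions` with coordinates `y = (y₁,y₂,y₃)`. -/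
def toQ (y : Fin 3 → ℝ) : Quaternion ℝ := ⟨y 0, y 1, y 2, 0⟩

/-- Coordinates of a tangent vector of `ℍ³`, i.e. a quaternion in `ℂ ⊕ jℝ`. -/
def projQ (q : Quaternion ℝ) : Fin 3 → ℝ := ![q.re, q.imI, q.imJ]

/-- The vector field `ζ ↦ b + aζ + ζa − ζcζ` on `ℍ³`, in coordinates. -/
def kappaField (a b c : ℂ) (y : Fin 3 → ℝ) : Fin 3 → ℝ :=
  projQ (cq b + cq a * toQ y + toQ y * cq a - toQ y * cq c * toQ y)

/-- Partial derivative of a function of `y ∈ ℝ³`. -/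
def pd (f : (Fin 3 → ℝ) → ℝ) (i : Fin 3) (y : Fin 3 → ℝ) : ℝ :=
  fderiv ℝ f y (Pi.single i 1)

/-- The curl of a vector field on the upper half-space, with respect to the
hyperbolic metric `(dy₁² + dy₂² + dy₃²)/y₃²` and the standard orientation:
`curl(u) = (*_g d u^♭)^♯`, which in coordinates reads
`curl(u)^k = y₃³ (∂_{k+1}(u_{k+2}/y₃²) − ∂_{k+2}(u_{k+1}/y₃²))`. -/
def hypCurl (F : (Fin 3 → ℝ) → (Fin 3 → ℝ)) (y : Fin 3 → ℝ) : Fin 3 → ℝ :=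
  fun k => (y 2) ^ 3 * (pd (fun z => F z (k + 2) / (z 2) ^ 2) (k + 1) y
                      - pd (fun z => F z (k + 1) / (z 2) ^ 2) (k + 2) y)

/-!
The Killing field is the quotient rule in the division algebra `ℍ`: for `γ(0) = 1` the derivative
of `N(t) M(t)⁻¹` at `0` is `N' − N(0) M'`, which for `N = γ₀₀ζ + γ₀₁`, `M = γ₁₀ζ + γ₁₁` gives
`b + aζ − ζ(cζ − a)`. For the curl, the conformal factor `y₃⁻²` of the metric turns the
hyperbolic curl into `y₃ · curl_E − 2 e₃ × ·`, where `curl_E` is the Euclidean curl; since `κ_h` is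
quadratic in `y`, both sides of `κ_{ih} = −½ curl κ_h` are then explicit polynomials in the
coordinates.
-/

open scoped Quaternion Matrix

lemma cq_eq_ofComplex : cq = ⇑Quaternion.ofComplex := rfl

@[simp] lemma toQ_re (y : Fin 3 → ℝ) : (toQ y).re = y 0 := rfl
@[simp] lemma toQ_imI (y : Fin 3 → ℝ) : (toQ y).imI = y 1 := rfl
@[simp] lemma toQ_imJ (y : Fin 3 → ℝ) : (toQ y).imJ = y 2 := rfl
@[simp] lemma toQ_imK (y : Fin 3 → ℝ) : (toQ y).imK = 0 := rfl

def kappaQuat (a b c : ℂ) (ζ : ℍ) : ℍ := cq b + cq a * ζ + ζ * cq a - ζ * cq c * ζ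

section DivisionRing

variable {𝕜 R : Type*} [NontriviallyNormedField 𝕜] [NormedDivisionRing R] [NormedAlgebra 𝕜 R]
  {N M : 𝕜 → R} {N' M' : R} {t : 𝕜}

theorem HasDerivAt.mul_inv' (hN : HasDerivAt N N' t) (hM : HasDerivAt M M' t) (hMt : M t ≠ 0) :
    HasDerivAt (fun s => N s * (M s)⁻¹) (N' * (M t)⁻¹ - N t * (M t)⁻¹ * M' * (M t)⁻¹) t := by
  have hMinv : HasDerivAt (fun s => (M s)⁻¹) (-((M t)⁻¹ * M' * (M t)⁻¹)) t := by
    have := (hasFDerivAt_inv' (𝕜 := 𝕜) hMt).comp_hasDerivAt t hM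
    simp only [neg_apply, ContinuousLinearMap.mulLeftRight_apply] at this
    exact this
  simpa [sub_eq_add_neg, mul_assoc] using hN.fun_mul hMinv

end DivisionRing

theorem hasDerivAt_moebius_action (γ : ℝ → Matrix (Fin 2) (Fin 2) ℂ)
    (h : Matrix (Fin 2) (Fin 2) ℂ) (hγ0 : γ 0 = 1)
    (hγ' : ∀ i j, HasDerivAt (fun t => γ t i j) (h i j) 0) (ζ : ℍ) :
    HasDerivAt
      (fun t => (cq (γ t 0 0) * ζ + cq (γ t 0 1)) * (cq (γ t 1 0) * ζ + cq (γ t 1 1))⁻¹)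
      (cq (h 0 1) + cq (h 0 0) * ζ - ζ * (cq (h 1 0) * ζ + cq (h 1 1))) 0 := by
  have hcq : ∀ i j, HasDerivAt (fun t => cq (γ t i j)) (cq (h i j)) 0 := fun i j =>
    Quaternion.ofComplex.toLinearMap.toContinuousLinearMap.hasFDerivAt.comp_hasDerivAt 0 (hγ' i j)
  have hN := ((hcq 0 0).mul_const ζ).fun_add (hcq 0 1)
  have hM := ((hcq 1 0).mul_const ζ).fun_add (hcq 1 1)
  have hN0 : cq (γ 0 0 0) * ζ + cq (γ 0 0 1) = ζ := by simp [hγ0, cq_eq_ofComplex]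
  have hM0 : cq (γ 0 1 0) * ζ + cq (γ 0 1 1) = 1 := by simp [hγ0, cq_eq_ofComplex]
  refine (hN.mul_inv' hM (by simp [hM0])).congr_deriv ?_
  rw [hN0, hM0, inv_one]
  noncomm_ring

theorem hasDerivAt_moebius_action_sl2 (a b c : ℂ) (γ : ℝ → Matrix (Fin 2) (Fin 2) ℂ)
    (hγ0 : γ 0 = 1) (hγ' : ∀ i j, HasDerivAt (fun t => γ t i j) (!![a, b; c, -a] i j) 0)
    (ζ : ℍ) :
    HasDerivAt
      (fun t => (cq (γ t 0 0) * ζ + cq (γ t 0 1)) * (cq (γ t 1 0) * ζ + cq (γ t 1 1))⁻¹)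
      (kappaQuat a b c ζ) 0 := by
  convert hasDerivAt_moebius_action γ _ hγ0 hγ' ζ using 1
  simp [kappaQuat, cq_eq_ofComplex, -Quaternion.coe_ofComplex]
  noncomm_ring

def euclideanCurl (F : (Fin 3 → ℝ) → (Fin 3 → ℝ)) (y : Fin 3 → ℝ) : Fin 3 → ℝ :=
  fun k => pd (fun z => F z (k + 2)) (k + 1) y - pd (fun z => F z (k + 1)) (k + 2) y

lemma pd_div_sq {f : (Fin 3 → ℝ) → ℝ} {y : Fin 3 → ℝ} (hf : DifferentiableAt ℝ f y)
    (hy : y 2 ≠ 0) (i : Fin 3) :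
    pd (fun z => f z / z 2 ^ 2) i y
      = pd f i y / y 2 ^ 2 - 2 * f y * (Pi.single i 1 : Fin 3 → ℝ) 2 / y 2 ^ 3 := by
  have hw : HasDerivAt (fun t : ℝ => (t ^ 2)⁻¹) (-(2 * y 2) / (y 2 ^ 2) ^ 2) (y 2) := by
    simpa using (hasDerivAt_pow 2 (y 2)).fun_inv (pow_ne_zero 2 hy)
  have hfw : HasFDerivAt (fun z => f z * (z 2 ^ 2)⁻¹) _ y :=
    hf.hasFDerivAt.mul (hw.comp_hasFDerivAt (f := fun z : Fin 3 → ℝ => z 2) y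
      (hasFDerivAt_apply 2 y))
  simp_rw [pd, div_eq_mul_inv, hfw.fderiv]
  simp
  field_simp
  ring

theorem hypCurl_eq_smul_euclideanCurl_sub {F : (Fin 3 → ℝ) → (Fin 3 → ℝ)} {y : Fin 3 → ℝ}
    (hF : ∀ j, DifferentiableAt ℝ (fun z => F z j) y) (hy : y 2 ≠ 0) :
    hypCurl F y = y 2 • euclideanCurl F y - (2 : ℝ) • (Pi.single 2 1 ⨯₃ F y) := by
  funext k
  simp only [hypCurl, Pi.sub_apply, Pi.smul_apply, euclideanCurl, pd_div_sq (hF _) hy]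
  fin_cases k <;> simp [cross_apply] <;> field_simp <;> ring

def toQL : (Fin 3 → ℝ) →L[ℝ] ℍ :=
  LinearMap.toContinuousLinearMap
    { toFun := toQ
      map_add' := fun _ _ => by ext <;> simp
      map_smul' := fun _ _ => by ext <;> simp }

def projQL : ℍ →L[ℝ] (Fin 3 → ℝ) :=
  LinearMap.toContinuousLinearMap
    { toFun := projQ
      map_add' := fun _ _ => by funext j; fin_cases j <;> simp [projQ]
      map_smul' := fun _ _ => by funext j; fin_cases j <;> simp [projQ] }

lemma fderiv_kappaQuat_apply (a b c : ℂ) (ζ v : ℍ) :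
    fderiv ℝ (kappaQuat a b c) ζ v = cq a * v + v * cq a - (v * cq c * ζ + ζ * cq c * v) := by
  have hid := hasFDerivAt_id (𝕜 := ℝ) ζ
  have h : HasFDerivAt (kappaQuat a b c) _ ζ :=
    (((hasFDerivAt_const (cq b) ζ).add (hid.const_mul (cq a))).add
      (hid.mul_const' (cq a))).sub ((hid.mul_const' (cq c)).mul' hid)
  rw [h.fderiv]
  simp [mul_assoc]
  abel

lemma differentiable_kappaQuat (a b c : ℂ) : Differentiable ℝ (kappaQuat a b c) := by
  unfold kappaQuat
  fun_prop

lemma hasFDerivAt_kappaField_apply (a b c : ℂ) (j : Fin 3) (y : Fin 3 → ℝ) :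
    HasFDerivAt (fun z => kappaField a b c z j)
      ((ContinuousLinearMap.proj j ∘L projQL) ∘L fderiv ℝ (kappaQuat a b c) (toQ y) ∘L toQL) y :=
  (ContinuousLinearMap.proj j ∘L projQL).hasFDerivAt.comp y
    ((differentiable_kappaQuat a b c _).hasFDerivAt.comp y toQL.hasFDerivAt)

lemma pd_kappaField (a b c : ℂ) (j i : Fin 3) (y : Fin 3 → ℝ) :
    pd (fun z => kappaField a b c z j) i y
      = projQ (fderiv ℝ (kappaQuat a b c) (toQ y) (toQ (Pi.single i 1))) j :=
  congrArg (· (Pi.single i 1)) (hasFDerivAt_kappaField_apply a b c j y).fderiv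

theorem kappaField_I_mul_eq_neg_half_hypCurl (a b c : ℂ) (y : Fin 3 → ℝ) (hy : y 2 ≠ 0) :
    kappaField (Complex.I * a) (Complex.I * b) (Complex.I * c) y
      = (-(1 / 2 : ℝ)) • hypCurl (kappaField a b c) y := by
  rw [hypCurl_eq_smul_euclideanCurl_sub
    (fun j => (hasFDerivAt_kappaField_apply a b c j y).differentiableAt) hy]
  funext k
  simp only [Pi.smul_apply, Pi.sub_apply, euclideanCurl, pd_kappaField, fderiv_kappaQuat_apply]
  fin_cases k <;> simp [kappaField, projQ, cq_eq_ofComplex, cross_apply,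
    Quaternion.re_mul, Quaternion.imI_mul, Quaternion.imJ_mul, Quaternion.imK_mul] <;> ring

theorem stmt_19 (a b c : ℂ)
    (γ : ℝ → Matrix (Fin 2) (Fin 2) ℂ)
    (hγ0 : γ 0 = 1)
    (hγ' : ∀ i j, HasDerivAt (fun t => γ t i j) (!![a, b; c, -a] i j) 0) :
    -- (1) the Killing field generated by `h = [[a,b],[c,−a]]` is
    --     `κ_h(ζ) = b + aζ + ζa − ζcζ`:
    (∀ ζ : Quaternion ℝ, ζ.imK = 0 → 0 < ζ.imJ →
      HasDerivAt
        (fun t => (cq (γ t 0 0) * ζ + cq (γ t 0 1))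
            * (cq (γ t 1 0) * ζ + cq (γ t 1 1))⁻¹)
        (cq b + cq a * ζ + ζ * cq a - ζ * cq c * ζ) 0)
    -- (2) `κ_{ih} = −(1/2) curl(κ_h)` on `ℍ³`:
    ∧ (∀ y : Fin 3 → ℝ, 0 < y 2 →
        kappaField (Complex.I * a) (Complex.I * b) (Complex.I * c) y
          = (-(1 / 2 : ℝ)) • hypCurl (kappaField a b c) y) := by
  exact ⟨fun ζ _ _ => hasDerivAt_moebius_action_sl2 a b c γ hγ0 hγ' ζ,
    fun y hy => kappaField_I_mul_eq_neg_half_hypCurl a b c y hy.ne'⟩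
end
end
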